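/- arXiv:1308.1719 — 2 statements merged into one kernel-verified Lean document; each statement's English description precedes it below -/
import Mathlib

section
/- Let $1 < r \leq 2$ and $p = r'$ its Hölder conjugate. Let $A_0, A_1, A_2 \subset \mathbb{R}^{1+2}$ be measurable sets and $F_0, F_1, F_2 \geq 0$ be measurable functions supported in $-A_0, A_1, A_2$ respectively. Then the trilinear convolution form $J(F_0, F_1, F_2) = \iint F_0(-X_0) F_1(X_1) F_2(X_0 - X_1)\, dX_1\, dX_0$ satisfies $J \lesssim \sup_{X_0 \in A_0} |A_1 \cap (X_0 - A_2)|^{1/r} \cdot \|F_0\|_{L^r} \|F_1\|_{L^p} \|F_2\|_{L^p}$. -/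
/-! For `x ∈ A₀` the integrand `F₁(y) F₂(x - y)` of the convolution lives on `A₁ ∩ (x - A₂)`,
so Hölder's inequality on that set gives
`(F₁ ⋆ F₂)(x) ≤ |A₁ ∩ (x - A₂)|^(1/r) ((F₁^p ⋆ F₂^p)(x))^(1/p)`.
Hölder in `x` with exponents `r, p` then reduces the form to `∫ F₁^p ⋆ F₂^p`, which by Fubini
and translation invariance is `‖F₁‖_p^p ‖F₂‖_p^p`. -/
open MeasureTheory ENNReal

/-- The trilinear convolution form `J(F₀,F₁,F₂) = ∬ F₀(-X₀)F₁(X₁)F₂(X₀-X₁) dX₁ dX₀`. -/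
noncomputable def trilinearForm (F0 F1 F2 : (Fin 3 → ℝ) → ℝ≥0∞) : ℝ≥0∞ :=
  ∫⁻ X0, ∫⁻ X1, F0 (-X0) * F1 X1 * F2 (X0 - X1)

/-- The `L^q` norm (`q` a positive real) of a nonnegative function on `ℝ^(1+2)`. -/
noncomputable def lpNorm3 (q : ℝ) (F : (Fin 3 → ℝ) → ℝ≥0∞) : ℝ≥0∞ :=
  (∫⁻ X, F X ^ q) ^ (1/q)

section Holder

variable {α : Type*} [MeasurableSpace α] {μ : Measure α} {r p : ℝ}

theorem lintegral_mul_rpow_one_div_le (hrp : r.HolderConjugate p) {f g : α → ℝ≥0∞}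
    (hf : AEMeasurable f μ) (hg : AEMeasurable g μ) :
    ∫⁻ a, f a * g a ^ (1 / p) ∂μ ≤ (∫⁻ a, f a ^ r ∂μ) ^ (1 / r) * (∫⁻ a, g a ∂μ) ^ (1 / p) := by
  refine (ENNReal.lintegral_mul_le_Lp_mul_Lq μ hrp hf (hg.pow_const _)).trans_eq ?_
  simp [← ENNReal.rpow_mul, hrp.symm.ne_zero]

theorem lintegral_le_measure_rpow_mul_of_support_subset (hrp : r.HolderConjugate p)
    {f : α → ℝ≥0∞} (hf : AEMeasurable f μ) {s : Set α} (hfs : f.support ⊆ s) :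
    ∫⁻ a, f a ∂μ ≤ μ s ^ (1 / r) * (∫⁻ a, f a ^ p ∂μ) ^ (1 / p) := by
  rw [← setLIntegral_eq_of_support_subset hfs]
  calc ∫⁻ a in s, f a ∂μ = ∫⁻ a in s, ((1 : α → ℝ≥0∞) * f) a ∂μ := by simp
    _ ≤ (∫⁻ a in s, (1 : α → ℝ≥0∞) a ^ r ∂μ) ^ (1 / r) * (∫⁻ a in s, f a ^ p ∂μ) ^ (1 / p) :=
      ENNReal.lintegral_mul_le_Lp_mul_Lq _ hrp aemeasurable_const hf.restrict
    _ ≤ μ s ^ (1 / r) * (∫⁻ a, f a ^ p ∂μ) ^ (1 / p) := by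
      simp only [Pi.one_apply, one_rpow, setLIntegral_const, one_mul]
      gcongr
      · exact hrp.symm.one_div_nonneg
      · exact Measure.restrict_le_self

end Holder

section Convolution

variable {G : Type*} [AddCommGroup G] [MeasurableSpace G] {μ : Measure G}

theorem lconvolution_apply_eq (f g : G → ℝ≥0∞) (x : G) :
    (f ⋆ₗ[μ] g) x = ∫⁻ y, f y * g (x - y) ∂μ := by
  simp only [lconvolution_def, neg_add_eq_sub]

variable [MeasurableAdd₂ G] [MeasurableNeg G]

theorem lintegral_lconvolution [SFinite μ] [μ.IsAddLeftInvariant] {f g : G → ℝ≥0∞}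
    (hf : Measurable f) (hg : Measurable g) :
    ∫⁻ x, (f ⋆ₗ[μ] g) x ∂μ = (∫⁻ x, f x ∂μ) * ∫⁻ x, g x ∂μ := by
  simp only [lconvolution_def]
  rw [lintegral_lintegral_swap (by fun_prop)]
  have inner (y : G) : ∫⁻ x, f y * g (-y + x) ∂μ = f y * ∫⁻ x, g x ∂μ := by
    rw [lintegral_const_mul'' _ (by fun_prop), lintegral_add_left_eq_self]
  simp only [inner]
  exact lintegral_mul_const'' _ hf.aemeasurable

theorem lconvolution_le_of_support_subset {r p : ℝ} (hrp : r.HolderConjugate p)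
    {f g : G → ℝ≥0∞} (hf : Measurable f) (hg : Measurable g) {s t : Set G}
    (hfs : f.support ⊆ s) (hgt : g.support ⊆ t) (x : G) :
    (f ⋆ₗ[μ] g) x ≤
      μ (s ∩ (fun y ↦ x - y) '' t) ^ (1 / r) * ((f ^ p ⋆ₗ[μ] g ^ p) x) ^ (1 / p) := by
  have hsupp : (fun y ↦ f y * g (x - y)).support ⊆ s ∩ (fun y ↦ x - y) '' t := by
    intro y hy
    obtain ⟨hfy, hgy⟩ := mul_ne_zero_iff.mp hy
    exact ⟨hfs hfy, x - y, hgt hgy, sub_sub_cancel x y⟩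
  rw [lconvolution_apply_eq, lconvolution_apply_eq]
  simpa only [Pi.pow_apply, ENNReal.mul_rpow_of_nonneg _ _ hrp.symm.nonneg] using
    lintegral_le_measure_rpow_mul_of_support_subset hrp (by fun_prop) hsupp

theorem lintegral_lintegral_mul_mul_sub_le [SFinite μ] [μ.IsAddLeftInvariant] {r p : ℝ}
    (hrp : r.HolderConjugate p) {h f g : G → ℝ≥0∞} (hh : Measurable h) (hf : Measurable f)
    (hg : Measurable g) {A0 A1 A2 : Set G} (hh0 : h.support ⊆ A0) (hf1 : f.support ⊆ A1)
    (hg2 : g.support ⊆ A2) :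
    ∫⁻ x, ∫⁻ y, h x * f y * g (x - y) ∂μ ∂μ ≤
      (⨆ x ∈ A0, μ (A1 ∩ (fun y ↦ x - y) '' A2)) ^ (1 / r) * (∫⁻ x, h x ^ r ∂μ) ^ (1 / r)
        * (∫⁻ x, f x ^ p ∂μ) ^ (1 / p) * (∫⁻ x, g x ^ p ∂μ) ^ (1 / p) := by
  set M := ⨆ x ∈ A0, μ (A1 ∩ (fun y ↦ x - y) '' A2)
  have hK : Measurable (f ^ p ⋆ₗ[μ] g ^ p) :=
    measurable_lconvolution μ (hf.pow_const p) (hg.pow_const p)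
  have hconv (x : G) : ∫⁻ y, h x * f y * g (x - y) ∂μ = h x * (f ⋆ₗ[μ] g) x := by
    simp only [mul_assoc, lconvolution_apply_eq]
    exact lintegral_const_mul'' _ (by fun_prop)
  have hpointwise (x : G) :
      h x * (f ⋆ₗ[μ] g) x ≤ M ^ (1 / r) * (h x * ((f ^ p ⋆ₗ[μ] g ^ p) x) ^ (1 / p)) := by
    by_cases hx : h x = 0
    · simp [hx]
    rw [mul_left_comm]
    gcongr
    refine (lconvolution_le_of_support_subset hrp hf hg hf1 hg2 x).trans ?_
    gcongr
    · exact hrp.one_div_nonneg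
    · exact le_biSup (fun x ↦ μ (A1 ∩ (fun y ↦ x - y) '' A2)) (hh0 hx)
  calc ∫⁻ x, ∫⁻ y, h x * f y * g (x - y) ∂μ ∂μ
      ≤ ∫⁻ x, M ^ (1 / r) * (h x * ((f ^ p ⋆ₗ[μ] g ^ p) x) ^ (1 / p)) ∂μ := by
        simp only [hconv]
        exact lintegral_mono hpointwise
    _ = M ^ (1 / r) * ∫⁻ x, h x * ((f ^ p ⋆ₗ[μ] g ^ p) x) ^ (1 / p) ∂μ :=
        lintegral_const_mul'' _ (hh.mul (hK.pow_const _)).aemeasurable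
    _ ≤ M ^ (1 / r) *
          ((∫⁻ x, h x ^ r ∂μ) ^ (1 / r) * (∫⁻ x, (f ^ p ⋆ₗ[μ] g ^ p) x ∂μ) ^ (1 / p)) := by
        gcongr
        exact lintegral_mul_rpow_one_div_le hrp hh.aemeasurable hK.aemeasurable
    _ = _ := by
        rw [lintegral_lconvolution (f := f ^ p) (g := g ^ p) (hf.pow_const p) (hg.pow_const p),
          ENNReal.mul_rpow_of_nonneg _ _ hrp.symm.one_div_nonneg]
        simp only [Pi.pow_apply]
        ring

end Convolution

theorem stmt2_general (r p : ℝ) (hr : 1 < r) (hp : 1/r + 1/p = 1) :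
    ∃ C : ℝ≥0∞, 0 < C ∧ C ≠ ⊤ ∧
      ∀ (A0 A1 A2 : Set (Fin 3 → ℝ)),
        MeasurableSet A0 → MeasurableSet A1 → MeasurableSet A2 →
      ∀ (F0 F1 F2 : (Fin 3 → ℝ) → ℝ≥0∞),
        Measurable F0 → Measurable F1 → Measurable F2 →
        (∀ X, F0 X ≠ 0 → -X ∈ A0) → (∀ X, F1 X ≠ 0 → X ∈ A1) →
        (∀ X, F2 X ≠ 0 → X ∈ A2) →
      trilinearForm F0 F1 F2 ≤
        C * (⨆ X0 ∈ A0, volume (A1 ∩ ((fun Y => X0 - Y) '' A2))) ^ (1/r)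
          * lpNorm3 r F0 * lpNorm3 p F1 * lpNorm3 p F2 := by
  have hrp : r.HolderConjugate p :=
    Real.holderConjugate_iff.mpr ⟨hr, by simpa only [one_div] using hp⟩
  refine ⟨1, one_pos, one_ne_top, fun A0 A1 A2 _ _ _ F0 F1 F2 hF0 hF1 hF2 hA0 hA1 hA2 ↦ ?_⟩
  have hnorm : lpNorm3 r F0 = (∫⁻ X, F0 (-X) ^ r) ^ (1 / r) := by
    rw [lpNorm3, lintegral_neg_eq_self fun X ↦ F0 X ^ r]
  rw [one_mul, hnorm]
  exact lintegral_lintegral_mul_mul_sub_le hrp (hF0.comp measurable_neg) hF1 hF2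
    (fun X hX ↦ by simpa using hA0 (-X) hX) (fun X ↦ hA1 X) (fun X ↦ hA2 X)

theorem stmt2 (r p : ℝ) (hr : 1 < r) (hr2 : r ≤ 2) (hp : 1/r + 1/p = 1) :
    ∃ C : ℝ≥0∞, 0 < C ∧ C ≠ ⊤ ∧
      ∀ (A0 A1 A2 : Set (Fin 3 → ℝ)),
        MeasurableSet A0 → MeasurableSet A1 → MeasurableSet A2 →
      ∀ (F0 F1 F2 : (Fin 3 → ℝ) → ℝ≥0∞),
        Measurable F0 → Measurable F1 → Measurable F2 →
        (∀ X, F0 X ≠ 0 → -X ∈ A0) → (∀ X, F1 X ≠ 0 → X ∈ A1) →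
        (∀ X, F2 X ≠ 0 → X ∈ A2) →
      trilinearForm F0 F1 F2 ≤
        C * (⨆ X0 ∈ A0, volume (A1 ∩ ((fun Y => X0 - Y) '' A2))) ^ (1/r)
          * lpNorm3 r F0 * lpNorm3 p F1 * lpNorm3 p F2 :=
  stmt2_general r p hr hp
end

section
/- Let $1 < r \leq 2$ and $p = r'$. Let $A_0, A_1, A_2 \subset \mathbb{R}^{1+2}$ be measurable with $|A_2| < \infty$, and let $F_0, F_1, F_2 \geq 0$ be supported in $-A_0, A_1, A_2$ respectively. Then $J(F_0, F_1, F_2) = \iint F_0(-X_0) F_1(X_1) F_2(X_0 - X_1)\, dX_1\, dX_0 \lesssim \sup_{X_1 \in A_1} |A_0 \cap (X_1 + A_2)|^{1/p} \cdot |A_2|^{\frac{1}{r} - \frac{1}{p}} \cdot \|F_0\|_{L^r} \|F_1\|_{L^p} \|F_2\|_{L^p}$. -/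
open MeasureTheory ENNReal

/-!
Write `J` as an integral over pairs `(X₀, X₁)` and apply Hölder with exponents `r, p` to
`F₀(-X₀) F₂(X₀ - X₁)` and `F₁(X₁) 1_T(X₀, X₁)`, where `T = {X₀ ∈ A₀, X₀ - X₁ ∈ A₂}` contains the
support of the integrand. By translation invariance the first factor has `L^r` norm
`‖F₀‖_r ‖F₂‖_r`. The fibre of `T` over `X₁` is `A₀ ∩ (X₁ + A₂)`, and only `X₁ ∈ A₁` matter, so the
second factor has `L^p` norm at most `(sup_{X₁ ∈ A₁} |A₀ ∩ (X₁ + A₂)|)^{1/p} ‖F₁‖_p`. Finally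
`r ≤ 2 ≤ p`, and Hölder on the support `A₂` of `F₂` gives `‖F₂‖_r ≤ |A₂|^{1/r - 1/p} ‖F₂‖_p`.
-/

open Function in
theorem lintegral_rpow_le_measure_rpow_mul_of_support_subset {α : Type*} [MeasurableSpace α]
    {μ : Measure α} {s : Set α} {f : α → ℝ≥0∞} (hf : AEMeasurable f μ) (hfs : support f ⊆ s) {r p : ℝ}
    (hr : 0 < r) (hrp : r ≤ p) :
    (∫⁻ x, f x ^ r ∂μ) ^ (1 / r) ≤ μ s ^ (1 / r - 1 / p) * (∫⁻ x, f x ^ p ∂μ) ^ (1 / p) := by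
  have hsupp : ∀ {q : ℝ}, 0 < q → (support fun x => f x ^ q) ⊆ s := fun hq x hx =>
    hfs fun h => hx (by simp [h, zero_rpow_of_pos hq])
  have key := eLpNorm'_le_eLpNorm'_mul_rpow_measure_univ hr hrp
    (hf.restrict (s := s)).aestronglyMeasurable
  simp only [eLpNorm'_eq_lintegral_enorm, enorm_eq_self, Measure.restrict_apply_univ,
    setLIntegral_eq_of_support_subset (hsupp hr),
    setLIntegral_eq_of_support_subset (hsupp (hr.trans_le hrp))] at key
  rwa [mul_comm] at key

theorem setLIntegral_prod_comp_snd_le {α β : Type*} [MeasurableSpace α] [MeasurableSpace β]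
    {μ : Measure α} {ν : Measure β} [SFinite μ] [SFinite ν] {T : Set (α × β)} (hT : MeasurableSet T)
    {f : β → ℝ≥0∞} (hf : Measurable f) {M : ℝ≥0∞}
    (hM : ∀ y, f y ≠ 0 → μ ((·, y) ⁻¹' T) ≤ M) :
    ∫⁻ z in T, f z.2 ∂μ.prod ν ≤ M * ∫⁻ y, f y ∂ν := by
  rw [← lintegral_indicator hT, lintegral_prod_symm' _ (Measurable.indicator (by fun_prop) hT),
    ← lintegral_const_mul _ hf]
  refine lintegral_mono fun y => ?_
  have hslice : ∀ x,
      T.indicator (fun z => f z.2) (x, y) = ((·, y) ⁻¹' T).indicator (fun _ => f y) x := fun _ =>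
    (Set.indicator_comp_right (·, y)).symm
  simp only [hslice, lintegral_indicator_const (measurable_prodMk_right hT)]
  rcases eq_or_ne (f y) 0 with hy | hy
  · simp [hy]
  · rw [mul_comm]
    exact mul_le_mul_left (hM y hy) _

section Group

variable {G : Type*} [AddGroup G] [MeasurableSpace G] [MeasurableAdd₂ G] [MeasurableNeg G]
  {μ : Measure G} [SFinite μ] [μ.IsAddLeftInvariant] [μ.IsNegInvariant]

theorem lintegral_prod_comp_neg_mul_comp_sub {f g : G → ℝ≥0∞} (hf : Measurable f)
    (hg : Measurable g) :
    ∫⁻ z, f (-z.1) * g (z.1 - z.2) ∂μ.prod μ = (∫⁻ x, f x ∂μ) * ∫⁻ x, g x ∂μ := by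
  rw [lintegral_prod _ (by fun_prop)]
  have hinner : ∀ x, ∫⁻ y, f (-x) * g (x - y) ∂μ = f (-x) * ∫⁻ y, g y ∂μ := fun x => by
    rw [lintegral_const_mul _ (by fun_prop),
      (Measure.measurePreserving_sub_left μ x).lintegral_comp hg]
  simp only [hinner]
  rw [lintegral_mul_const _ (by fun_prop), (Measure.measurePreserving_neg μ).lintegral_comp hf]

theorem lintegral_lintegral_mul_comp_sub_le {r p : ℝ} (hrp : r.HolderConjugate p)
    {A0 A2 : Set G} (hA0 : MeasurableSet A0) (hA2 : MeasurableSet A2)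
    {f0 f1 f2 : G → ℝ≥0∞} (hf0 : Measurable f0) (hf1 : Measurable f1) (hf2 : Measurable f2)
    (hf0A : ∀ x, f0 x ≠ 0 → -x ∈ A0) (hf2A : ∀ x, f2 x ≠ 0 → x ∈ A2) {M : ℝ≥0∞}
    (hM : ∀ y, f1 y ≠ 0 → μ (A0 ∩ (· - y) ⁻¹' A2) ≤ M) :
    ∫⁻ x, ∫⁻ y, f0 (-x) * f1 y * f2 (x - y) ∂μ ∂μ ≤
      ((∫⁻ x, f0 x ^ r ∂μ) * ∫⁻ x, f2 x ^ r ∂μ) ^ (1 / r) * (M * ∫⁻ x, f1 x ^ p ∂μ) ^ (1 / p) := by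
  set T : Set (G × G) := Prod.fst ⁻¹' A0 ∩ (fun z => z.1 - z.2) ⁻¹' A2
  have hT : MeasurableSet T := (hA0.preimage measurable_fst).inter (hA2.preimage (by fun_prop))
  set g : G × G → ℝ≥0∞ := fun z => f0 (-z.1) * f2 (z.1 - z.2)
  set h : G × G → ℝ≥0∞ := T.indicator fun z => f1 z.2
  have hle : ∀ z : G × G, f0 (-z.1) * f1 z.2 * f2 (z.1 - z.2) ≤ (g * h) z := fun z => by
    by_cases hz : z ∈ T
    · simp [g, h, Set.indicator_of_mem hz, mul_right_comm]
    · have hgz : f0 (-z.1) * f2 (z.1 - z.2) = 0 := by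
        by_contra hg
        obtain ⟨h0, h2⟩ := mul_ne_zero_iff.1 hg
        exact hz ⟨by simpa using hf0A _ h0, hf2A _ h2⟩
      rw [mul_right_comm, hgz, zero_mul]
      exact bot_le
  have hgr : ∫⁻ z, g z ^ r ∂μ.prod μ = (∫⁻ x, f0 x ^ r ∂μ) * ∫⁻ x, f2 x ^ r ∂μ := by
    simp only [g, mul_rpow_of_nonneg _ _ hrp.nonneg]
    exact lintegral_prod_comp_neg_mul_comp_sub (hf0.pow_const r) (hf2.pow_const r)
  have hhp : ∫⁻ z, h z ^ p ∂μ.prod μ ≤ M * ∫⁻ x, f1 x ^ p ∂μ := by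
    have : (fun z => h z ^ p) = T.indicator fun z => f1 z.2 ^ p :=
      (Set.indicator_comp_of_zero (g := (· ^ p)) (zero_rpow_of_pos hrp.symm.pos)).symm
    rw [this, lintegral_indicator hT]
    exact setLIntegral_prod_comp_snd_le hT (hf1.pow_const p)
      fun y hy => hM y fun h0 => hy (by simp [h0, zero_rpow_of_pos hrp.symm.pos])
  calc ∫⁻ x, ∫⁻ y, f0 (-x) * f1 y * f2 (x - y) ∂μ ∂μ
      = ∫⁻ z, f0 (-z.1) * f1 z.2 * f2 (z.1 - z.2) ∂μ.prod μ := by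
        rw [lintegral_prod _ (by fun_prop)]
    _ ≤ ∫⁻ z, (g * h) z ∂μ.prod μ := lintegral_mono hle
    _ ≤ (∫⁻ z, g z ^ r ∂μ.prod μ) ^ (1 / r) * (∫⁻ z, h z ^ p ∂μ.prod μ) ^ (1 / p) :=
        ENNReal.lintegral_mul_le_Lp_mul_Lq (f := g) (g := h) _ hrp (by simp only [g]; fun_prop)
          (Measurable.indicator (by fun_prop) hT).aemeasurable
    _ ≤ _ := by
        rw [hgr]
        exact mul_le_mul' le_rfl (rpow_le_rpow hhp hrp.symm.one_div_nonneg)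

end Group

theorem stmt3 (r p : ℝ) (hr : 1 < r) (hr2 : r ≤ 2) (hp : 1/r + 1/p = 1) :
    ∃ C : ℝ≥0∞, 0 < C ∧ C ≠ ⊤ ∧
      ∀ (A0 A1 A2 : Set (Fin 3 → ℝ)),
        MeasurableSet A0 → MeasurableSet A1 → MeasurableSet A2 →
        volume A2 < ⊤ →
      ∀ (F0 F1 F2 : (Fin 3 → ℝ) → ℝ≥0∞),
        Measurable F0 → Measurable F1 → Measurable F2 →
        (∀ X, F0 X ≠ 0 → -X ∈ A0) → (∀ X, F1 X ≠ 0 → X ∈ A1) →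
        (∀ X, F2 X ≠ 0 → X ∈ A2) →
      trilinearForm F0 F1 F2 ≤
        C * (⨆ X1 ∈ A1, volume (A0 ∩ ((fun Y => X1 + Y) '' A2))) ^ (1/p)
          * volume A2 ^ (1/r - 1/p)
          * lpNorm3 r F0 * lpNorm3 p F1 * lpNorm3 p F2 := by
  refine ⟨1, one_pos, one_ne_top, ?_⟩
  intro A0 A1 A2 hA0 _ hA2 _ F0 F1 F2 hF0 hF1 hF2 hF0A hF1A hF2A
  set M := ⨆ X1 ∈ A1, volume (A0 ∩ ((fun Y => X1 + Y) '' A2))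
  have hrp : r.HolderConjugate p := Real.holderConjugate_iff.2 ⟨hr, by simpa [one_div] using hp⟩
  have hrp_le : r ≤ p := (one_div_le_one_div hrp.symm.pos hrp.pos).1 <| by
    linarith [one_div_le_one_div_of_le hrp.pos hr2]
  have hM : ∀ y, F1 y ≠ 0 → volume (A0 ∩ (· - y) ⁻¹' A2) ≤ M := fun y hy => by
    simp only [M, Set.image_add_left, neg_add_eq_sub]
    exact le_iSup₂ (f := fun X1 (_ : X1 ∈ A1) => volume (A0 ∩ (· - X1) ⁻¹' A2)) y (hF1A y hy)
  calc trilinearForm F0 F1 F2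
      ≤ ((∫⁻ x, F0 x ^ r) * ∫⁻ x, F2 x ^ r) ^ (1 / r) * (M * ∫⁻ x, F1 x ^ p) ^ (1 / p) :=
        lintegral_lintegral_mul_comp_sub_le hrp hA0 hA2 hF0 hF1 hF2 hF0A hF2A hM
    _ = lpNorm3 r F0 * lpNorm3 r F2 * (M ^ (1 / p) * lpNorm3 p F1) := by
        rw [mul_rpow_of_nonneg _ _ hrp.one_div_nonneg,
          mul_rpow_of_nonneg _ _ hrp.symm.one_div_nonneg]
        rfl
    _ ≤ lpNorm3 r F0 * (volume A2 ^ (1 / r - 1 / p) * lpNorm3 p F2)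
          * (M ^ (1 / p) * lpNorm3 p F1) := by
        gcongr
        exact lintegral_rpow_le_measure_rpow_mul_of_support_subset hF2.aemeasurable hF2A
          hrp.pos hrp_le
    _ = 1 * M ^ (1 / p) * volume A2 ^ (1 / r - 1 / p)
          * lpNorm3 r F0 * lpNorm3 p F1 * lpNorm3 p F2 := by
        ring
end
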